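/- arXiv:1207.7193 — 2 statements merged into one kernel-verified Lean document; each statement's English description precedes it below -/
import Mathlib

section
/- Let f : {-1,1}^n → {-1,1} and i ∈ [n], with uniform-distribution Fourier coefficients. If there exist a_i, b_i ∈ {-1,1} such that f̂(∅) + f̂({i})·a_i = b_i, then f is canalizing in variable i with canalizing input value a_i and output value b_i, i.e., f(x) = b_i for all x with x_i = a_i. -/
/-- ±1 encoding of a Boolean value. -/
noncomputable def pm (b : Bool) : ℝ := if b then 1 else -1

/-- Fourier coefficient of `f` at `U` w.r.t. the uniform distribution on `{-1,1}^n`. -/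
noncomputable def fhat {n : ℕ} (f : (Fin n → Bool) → Bool) (U : Finset (Fin n)) : ℝ :=
  (2 : ℝ)⁻¹ ^ n * ∑ x : Fin n → Bool, pm (f x) * ∏ i ∈ U, pm (x i)

lemma pm_sq (b : Bool) : pm b * pm b = 1 := by cases b <;> simp [pm]

lemma sum_pm_coord (n : ℕ) (i : Fin n) : ∑ x : Fin n → Bool, pm (x i) = 0 := by
  apply Finset.sum_ninvolution (fun x => Function.update x i (!x i))
  · intro x
    simp only [Function.update_self]
    cases x i <;> simp [pm]
  · intro x hx
    intro hcontra
    have := congrFun hcontra i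
    simp at this
  · intro x; exact Finset.mem_univ _
  · intro x
    funext j
    by_cases hj : j = i
    · subst hj; simp
    · simp [Function.update_of_ne hj]

/-- If `f̂(∅) + f̂({i})·a = b` for some `a, b ∈ {-1,1}`, then `f` is canalizing
in variable `i` with canalizing input value `a` and output value `b`. -/
theorem fourier_canalizing {n : ℕ} (f : (Fin n → Bool) → Bool) (i : Fin n) (a b : Bool)
    (h : fhat f ∅ + fhat f {i} * pm a = pm b) :
    ∀ x : Fin n → Bool, x i = a → f x = b := by
  intro x hx
  have hC : ∑ y : Fin n → Bool, pm (y i) = 0 := sum_pm_coord n i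
  have h2 : (0:ℝ) < 2 ^ n := by positivity
  have hAB : (∑ y : Fin n → Bool, pm (f y))
      + (∑ y : Fin n → Bool, pm (f y) * pm (y i)) * pm a = 2 ^ n * pm b := by
    have h' := h
    simp only [fhat, Finset.prod_empty, Finset.prod_singleton, mul_one] at h'
    have := congrArg (fun t => (2:ℝ) ^ n * t) h'
    simp only [mul_add, ← mul_assoc] at this
    rw [show ((2:ℝ)^n * (2:ℝ)⁻¹ ^ n) = 1 by
      rw [← mul_pow]; norm_num] at this
    simpa using this
  have hcard : (Fintype.card (Fin n → Bool) : ℝ) = 2 ^ n := by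
    simp [Fintype.card_fun]
  have hT : ∑ y : Fin n → Bool, (1 - pm b * pm (f y)) * (1 + pm a * pm (y i)) = 0 := by
    have expand : ∀ y : Fin n → Bool, (1 - pm b * pm (f y)) * (1 + pm a * pm (y i))
        = 1 + pm a * pm (y i) - pm b * pm (f y) - (pm b * pm a) * (pm (f y) * pm (y i)) := by
      intro y; ring
    simp only [expand]
    rw [Finset.sum_sub_distrib, Finset.sum_sub_distrib, Finset.sum_add_distrib,
        ← Finset.mul_sum, ← Finset.mul_sum, ← Finset.mul_sum, hC]
    simp only [Finset.sum_const, Finset.card_univ, nsmul_eq_mul, mul_one, mul_zero, add_zero]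
    rw [hcard]
    linear_combination (-(pm b)) * hAB + (-(2:ℝ)^n) * pm_sq b
  have hnonneg : ∀ y ∈ (Finset.univ : Finset (Fin n → Bool)),
      0 ≤ (1 - pm b * pm (f y)) * (1 + pm a * pm (y i)) := by
    intro y _
    have h1 : pm b * pm (f y) ≤ 1 := by cases b <;> cases f y <;> norm_num [pm]
    have h2 : -1 ≤ pm a * pm (y i) := by cases a <;> cases y i <;> norm_num [pm]
    nlinarith
  have hall := (Finset.sum_eq_zero_iff_of_nonneg hnonneg).mp hT x (Finset.mem_univ x)
  rw [hx] at hall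
  rw [pm_sq a] at hall
  have : 1 - pm b * pm (f x) = 0 := by
    rcases mul_eq_zero.mp hall with h' | h'
    · exact h'
    · norm_num at h'
  cases b <;> cases hfx : f x <;> simp [pm, hfx] at this ⊢
end

section
/- Let f : {-1,1}^n → {-1,1} have i.i.d. uniform inputs and be canalizing in variable i with f̂(∅) = c. Then MI(f(X); X_i) = h((1+c)/2) − (1/2)·h(|c|). In particular this value is independent of the canalizing value a_i and canalized value b_i. -/
/-- Binary entropy in bits (with `h 0 = h 1 = 0` since `logb 2 0 = 0`). -/
noncomputable def binEnt (p : ℝ) : ℝ := -(p * Real.logb 2 p) - (1 - p) * Real.logb 2 (1 - p)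

/-- Mutual information `MI(f(X); X_i)` under i.i.d. uniform inputs:
`H(f(X)) - H(f(X) | X_i)`, entropies in bits. -/
noncomputable def MI {n : ℕ} (f : (Fin n → Bool) → Bool) (i : Fin n) : ℝ :=
  binEnt ((∑ x : Fin n → Bool, if f x then (1 : ℝ) else 0) / 2 ^ n) -
    ∑ v : Bool, (1 / 2) *
      binEnt ((∑ x : Fin n → Bool, if f x ∧ x i = v then (1 : ℝ) else 0) / 2 ^ (n - 1))

open Finset

lemma binEnt_zero : binEnt 0 = 0 := by simp [binEnt]

lemma binEnt_one : binEnt 1 = 0 := by simp [binEnt]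

lemma binEnt_one_sub (p : ℝ) : binEnt (1 - p) = binEnt p := by
  simp only [binEnt, sub_sub_cancel]; ring

lemma card_filter_apply_eq {ι β : Type*} [Fintype ι] [DecidableEq ι] [Fintype β] [DecidableEq β]
    (i : ι) (v : β) : #{x : ι → β | x i = v} = Fintype.card β ^ (Fintype.card ι - 1) := by
  simpa using Fintype.card_filter_piFinset_const_eq_of_mem univ i (mem_univ v)

lemma Fintype.sum_bool_eq_add_not {M : Type*} [AddCommMonoid M] (g : Bool → M) (a : Bool) :
    ∑ v, g v = g a + g (!a) := by
  cases a <;> simp [add_comm]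

section BooleanFunction

variable {n : ℕ} (f : (Fin n → Bool) → Bool)

noncomputable def probTrue : ℝ := (∑ x : Fin n → Bool, if f x then (1 : ℝ) else 0) / 2 ^ n

noncomputable def probTrueGiven (i : Fin n) (v : Bool) : ℝ :=
  (∑ x : Fin n → Bool, if f x ∧ x i = v then (1 : ℝ) else 0) / 2 ^ (n - 1)

lemma MI_eq (i : Fin n) :
    MI f i = binEnt (probTrue f) - ∑ v : Bool, (1 / 2) * binEnt (probTrueGiven f i v) := rfl

lemma fhat_empty : fhat f ∅ = 2 * probTrue f - 1 := by
  have hpm (x : Fin n → Bool) : pm (f x) = 2 * (if f x then 1 else 0) - 1 := by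
    cases f x <;> norm_num [pm]
  simp only [fhat, prod_empty, mul_one, hpm, sum_sub_distrib, ← mul_sum, probTrue, sum_const,
    card_univ, Fintype.card_fun, Fintype.card_bool, Fintype.card_fin, nsmul_eq_mul]
  push_cast
  rw [inv_pow]
  field_simp

variable {f}

lemma probTrue_eq_avg (i : Fin n) : probTrue f = (∑ v, probTrueGiven f i v) / 2 := by
  obtain ⟨m, rfl⟩ := Nat.exists_eq_add_one.mpr (Fin.pos i)
  have hsplit (x : Fin (m + 1) → Bool) : (if f x then (1 : ℝ) else 0) =
      ∑ v, if f x ∧ x i = v then 1 else 0 := by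
    cases f x <;> cases x i <;> simp
  simp only [probTrue, probTrueGiven, hsplit, Nat.add_sub_cancel, ← sum_div]
  rw [sum_comm, pow_succ]
  ring

lemma probTrueGiven_nonneg (i : Fin n) (v : Bool) : 0 ≤ probTrueGiven f i v := by
  unfold probTrueGiven; positivity

lemma sum_ite_apply_eq (i : Fin n) (v : Bool) :
    ∑ x : Fin n → Bool, (if x i = v then (1 : ℝ) else 0) = 2 ^ (n - 1) := by
  rw [sum_boole, card_filter_apply_eq]; simp

lemma probTrueGiven_le_one (i : Fin n) (v : Bool) : probTrueGiven f i v ≤ 1 := by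
  rw [probTrueGiven, div_le_one (by positivity), ← sum_ite_apply_eq i v]
  gcongr with x
  split_ifs <;> simp_all

variable {i : Fin n} {a b : Bool}

lemma probTrueGiven_of_canalizing (hcan : ∀ x : Fin n → Bool, x i = a → f x = b) :
    probTrueGiven f i a = if b then 1 else 0 := by
  have hcount : ∑ x : Fin n → Bool, (if f x ∧ x i = a then (1 : ℝ) else 0) =
      ∑ x : Fin n → Bool, if b ∧ x i = a then 1 else 0 :=
    sum_congr rfl fun x _ => by by_cases hx : x i = a <;> simp [hx, hcan]
  cases b <;> simp [probTrueGiven, hcount, card_filter_apply_eq]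

lemma MI_eq_of_canalizing (hcan : ∀ x : Fin n → Bool, x i = a → f x = b) :
    MI f i = binEnt (probTrue f) - (1 / 2) * binEnt (probTrueGiven f i (!a)) := by
  rw [MI_eq, Fintype.sum_bool_eq_add_not _ a, probTrueGiven_of_canalizing hcan]
  cases b <;> simp [binEnt_zero, binEnt_one]

end BooleanFunction

/-- For `f` canalizing in variable `i` with `f̂(∅) = c`, the mutual information
equals `h((1+c)/2) - (1/2)·h(|c|)`; in particular it does not depend on the
canalizing value `a` or the canalized value `b`. -/
theorem mi_of_canalizing {n : ℕ} (f : (Fin n → Bool) → Bool) (i : Fin n) (a b : Bool)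
    (hcan : ∀ x : Fin n → Bool, x i = a → f x = b) (c : ℝ) (hc : fhat f ∅ = c) :
    MI f i = binEnt ((1 + c) / 2) - (1 / 2) * binEnt |c| := by
  rw [MI_eq_of_canalizing hcan]
  set q := probTrueGiven f i (!a)
  have hq0 : 0 ≤ q := probTrueGiven_nonneg i _
  have hq1 : q ≤ 1 := probTrueGiven_le_one i _
  have hp : probTrue f = (q + if b then 1 else 0) / 2 := by
    rw [probTrue_eq_avg i, Fintype.sum_bool_eq_add_not _ a, probTrueGiven_of_canalizing hcan,
      add_comm]
  have hcq : c = q + (if b then 1 else 0) - 1 := by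
    rw [← hc, fhat_empty, hp]; ring
  have hent : binEnt |c| = binEnt q := by
    cases b
    · rw [abs_of_nonpos (by simp [hcq]; linarith), ← binEnt_one_sub]; simp [hcq]
    · rw [abs_of_nonneg (by simp [hcq]; linarith)]; simp [hcq]
  rw [hent, hp, hcq]
  ring_nf
end
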